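/- Let n ≥ d ≥ 1 be integers. For every f : {−1,1}^n → ℝ, W^{≥d}(f) = 2d · ∑_{S⊆[n], |S|=d} ∫₀^∞ (e^{2t} − 1)^{d−1} e^{−2dt} ‖P_t ∂_S f‖₂² dt. -/

import Mathlib

open Finset MeasureTheory
open scoped BigOperators Classical

/-- Expectation over the uniform measure on the hypercube `{-1,1}^n` (coded by `Bool`). -/
noncomputable def expectation {n : ℕ} (f : (Fin n → Bool) → ℝ) : ℝ :=
  (∑ x : Fin n → Bool, f x) / 2 ^ n

/-- Probability of an event under the uniform measure on the hypercube. -/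
noncomputable def pr {n : ℕ} (P : (Fin n → Bool) → Prop) : ℝ :=
  expectation (fun x => if P x then (1 : ℝ) else 0)

/-- Walsh function `χ_S`. -/
noncomputable def walsh {n : ℕ} (S : Finset (Fin n)) (x : Fin n → Bool) : ℝ :=
  ∏ j ∈ S, (if x j then (1 : ℝ) else -1)

/-- Fourier--Walsh coefficient `f̂(S)`. -/
noncomputable def fwCoeff {n : ℕ} (f : (Fin n → Bool) → ℝ) (S : Finset (Fin n)) : ℝ :=
  expectation (fun x => f x * walsh S x)

/-- T-influence `Inf_S(f) = ∑_{T ⊇ S} f̂(T)^2`. -/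
noncomputable def TInf {n : ℕ} (f : (Fin n → Bool) → ℝ) (S : Finset (Fin n)) : ℝ :=
  ∑ T ∈ Finset.univ.filter (fun T : Finset (Fin n) => S ⊆ T), fwCoeff f T ^ 2

/-- Fourier weight at degrees `≥ d`. -/
noncomputable def Wge {n : ℕ} (d : ℕ) (f : (Fin n → Bool) → ℝ) : ℝ :=
  ∑ T ∈ Finset.univ.filter (fun T : Finset (Fin n) => d ≤ T.card), fwCoeff f T ^ 2

/-- Flip coordinate `i`. -/
def flipBit {n : ℕ} (y : Fin n → Bool) (i : Fin n) : Fin n → Bool :=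
  Function.update y i (!(y i))

/-- `i` is `S`-pivotal for `f` on input `x`. -/
def pivotal {n : ℕ} (f : (Fin n → Bool) → ℝ) (S : Finset (Fin n)) (i : Fin n)
    (x : Fin n → Bool) : Prop :=
  ∃ y : Fin n → Bool, (∀ j, j ∉ S → y j = x j) ∧ f y ≠ f (flipBit y i)

/-- Joint influence `JInf_S(f)`. -/
noncomputable def JInf {n : ℕ} (f : (Fin n → Bool) → ℝ) (S : Finset (Fin n)) : ℝ :=
  pr (fun x => ∀ i ∈ S, pivotal f S i x)

/-- Single-bit discrete partial derivative. -/
noncomputable def deriv1 {n : ℕ} (i : Fin n) (f : (Fin n → Bool) → ℝ) :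
    (Fin n → Bool) → ℝ :=
  fun x => (f (Function.update x i true) - f (Function.update x i false)) / 2

/-- Multi-bit discrete partial derivative `∂_S f`. -/
noncomputable def derivS {n : ℕ} (S : Finset (Fin n)) (f : (Fin n → Bool) → ℝ) :
    (Fin n → Bool) → ℝ :=
  S.toList.foldr deriv1 f

/-- Heat semigroup `P_t`. -/
noncomputable def heat {n : ℕ} (t : ℝ) (g : (Fin n → Bool) → ℝ) : (Fin n → Bool) → ℝ :=
  fun x => ∑ S : Finset (Fin n), Real.exp (-(S.card : ℝ) * t) * fwCoeff g S * walsh S x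

/-- Squared `L²` norm. -/
noncomputable def norm2sq {n : ℕ} (g : (Fin n → Bool) → ℝ) : ℝ :=
  expectation (fun x => g x ^ 2)

/-- Total influence. -/
noncomputable def totinf {n : ℕ} (f : (Fin n → Bool) → ℝ) : ℝ :=
  ∑ i : Fin n, TInf f {i}


section lemmas
variable {n : ℕ}

/-- flipping bit i -/
def flp (i : Fin n) (x : Fin n → Bool) : Fin n → Bool := Function.update x i (!(x i))

lemma flp_invol (i : Fin n) : Function.Involutive (flp i) := by
  intro x
  simp [flp, Function.update_idem, Function.update_self, Function.update_eq_self]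

lemma sum_flp (i : Fin n) (F : (Fin n → Bool) → ℝ) :
    ∑ x : Fin n → Bool, F (flp i x) = ∑ x, F x :=
  Fintype.sum_bijective (flp i) (flp_invol i).bijective _ _ (fun _ => rfl)

lemma flp_apply_ne (i : Fin n) (x : Fin n → Bool) {j : Fin n} (h : j ≠ i) :
    flp i x j = x j := Function.update_of_ne h _ _

lemma walsh_update_not_mem {S : Finset (Fin n)} {i : Fin n} (h : i ∉ S) (x : Fin n → Bool)
    (b : Bool) : walsh S (Function.update x i b) = walsh S x := by
  refine Finset.prod_congr rfl fun j hj => ?_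
  rw [Function.update_of_ne (fun hji : j = i => h (hji ▸ hj)) _ _]

lemma walsh_flp_not_mem {S : Finset (Fin n)} {i : Fin n} (h : i ∉ S) (x : Fin n → Bool) :
    walsh S (flp i x) = walsh S x := walsh_update_not_mem h x _

lemma walsh_eq_factor {S : Finset (Fin n)} {i : Fin n} (h : i ∈ S) (x : Fin n → Bool) :
    walsh S x = (if x i then (1:ℝ) else -1) * walsh (S.erase i) x :=
  (Finset.mul_prod_erase S _ h).symm

lemma walsh_flp_mem {S : Finset (Fin n)} {i : Fin n} (h : i ∈ S) (x : Fin n → Bool) :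
    walsh S (flp i x) = - walsh S x := by
  rw [walsh_eq_factor h (flp i x), walsh_eq_factor h x,
    show walsh (S.erase i) (flp i x) = walsh (S.erase i) x from
      walsh_update_not_mem (Finset.notMem_erase i S) x _,
    show flp i x i = !(x i) from Function.update_self _ _ _]
  cases x i <;> simp

lemma expectation_walsh (S : Finset (Fin n)) :
    expectation (walsh S) = if S = ∅ then 1 else 0 := by
  split_ifs with h
  · subst h
    simp [expectation, walsh]
  · obtain ⟨i, hi⟩ := Finset.nonempty_iff_ne_empty.2 h
    have h0 : ∑ x : Fin n → Bool, walsh S x = 0 := by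
      have := sum_flp i (walsh S)
      have h2 : ∑ x : Fin n → Bool, walsh S (flp i x) = ∑ x : Fin n → Bool, - walsh S x := by
        refine Finset.sum_congr rfl fun x _ => walsh_flp_mem hi x
      rw [h2, Finset.sum_neg_distrib] at this
      linarith
    simp [expectation, h0]

lemma walsh_mul (S T : Finset (Fin n)) (x : Fin n → Bool) :
    walsh S x * walsh T x = walsh ((S \ T) ∪ (T \ S)) x := by
  classical
  have hS : walsh S x = walsh (S \ T) x * walsh (S ∩ T) x := by
    rw [walsh, walsh, walsh, ← Finset.prod_union (Finset.disjoint_sdiff_inter S T)]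
    congr 1
    exact (Finset.sdiff_union_inter S T).symm
  have hT : walsh T x = walsh (T \ S) x * walsh (S ∩ T) x := by
    rw [Finset.inter_comm, walsh, walsh, walsh,
      ← Finset.prod_union (Finset.disjoint_sdiff_inter T S)]
    congr 1
    exact (Finset.sdiff_union_inter T S).symm
  have hsq : walsh (S ∩ T) x * walsh (S ∩ T) x = 1 := by
    rw [walsh, ← Finset.prod_mul_distrib]
    refine Finset.prod_eq_one fun j _ => by cases x j <;> norm_num
  have hU : walsh ((S \ T) ∪ (T \ S)) x = walsh (S \ T) x * walsh (T \ S) x := by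
    rw [walsh, walsh, walsh, ← Finset.prod_union (disjoint_sdiff_sdiff)]
  rw [hS, hT, hU]
  calc walsh (S \ T) x * walsh (S ∩ T) x * (walsh (T \ S) x * walsh (S ∩ T) x)
      = walsh (S \ T) x * walsh (T \ S) x * (walsh (S ∩ T) x * walsh (S ∩ T) x) := by ring
    _ = walsh (S \ T) x * walsh (T \ S) x := by rw [hsq, mul_one]

lemma sdiff_union_sdiff_empty_iff (S T : Finset (Fin n)) :
    (S \ T) ∪ (T \ S) = ∅ ↔ S = T := by
  constructor
  · intro h
    rw [Finset.union_eq_empty] at h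
    exact Finset.Subset.antisymm (Finset.sdiff_eq_empty_iff_subset.1 h.1)
      (Finset.sdiff_eq_empty_iff_subset.1 h.2)
  · rintro rfl; simp

lemma expectation_walsh_mul (S T : Finset (Fin n)) :
    expectation (fun x => walsh S x * walsh T x) = if S = T then 1 else 0 := by
  have : (fun x => walsh S x * walsh T x) = walsh ((S \ T) ∪ (T \ S)) := by
    funext x; exact walsh_mul S T x
  rw [this, expectation_walsh]
  simp only [sdiff_union_sdiff_empty_iff]

lemma expectation_sum {ι : Type*} (s : Finset ι) (F : ι → (Fin n → Bool) → ℝ) :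
    expectation (fun x => ∑ i ∈ s, F i x) = ∑ i ∈ s, expectation (F i) := by
  simp only [expectation, ← Finset.sum_div]
  rw [Finset.sum_comm]

lemma expectation_const_mul (c : ℝ) (g : (Fin n → Bool) → ℝ) :
    expectation (fun x => c * g x) = c * expectation g := by
  simp only [expectation, ← Finset.mul_sum, mul_div_assoc]

end lemmas

section lemmas2
variable {n : ℕ}

lemma norm2sq_fourier_sum (c : Finset (Fin n) → ℝ) :
    norm2sq (fun x => ∑ S : Finset (Fin n), c S * walsh S x) = ∑ S : Finset (Fin n), c S ^ 2 := by
  have key : ∀ x : Fin n → Bool, (∑ S : Finset (Fin n), c S * walsh S x) ^ 2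
      = ∑ S : Finset (Fin n), ∑ T : Finset (Fin n), c S * c T * (walsh S x * walsh T x) := by
    intro x
    rw [sq, Finset.sum_mul_sum]
    exact Finset.sum_congr rfl fun S _ => Finset.sum_congr rfl fun T _ => by ring
  have : norm2sq (fun x => ∑ S : Finset (Fin n), c S * walsh S x)
      = ∑ S : Finset (Fin n), ∑ T : Finset (Fin n),
          c S * c T * expectation (fun x => walsh S x * walsh T x) := by
    rw [norm2sq]
    simp only [key]
    rw [expectation_sum]
    refine Finset.sum_congr rfl fun S _ => ?_
    rw [expectation_sum]
    exact Finset.sum_congr rfl fun T _ => expectation_const_mul _ _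
  rw [this]
  refine Finset.sum_congr rfl fun S _ => ?_
  rw [Finset.sum_eq_single S]
  · rw [expectation_walsh_mul]; simp [sq]
  · intro T _ hT
    rw [expectation_walsh_mul]
    simp [Ne.symm hT]
  · simp

lemma norm2sq_heat (t : ℝ) (g : (Fin n → Bool) → ℝ) :
    norm2sq (heat t g) = ∑ T : Finset (Fin n),
      Real.exp (-(2 * (T.card : ℝ)) * t) * fwCoeff g T ^ 2 := by
  have : heat t g = fun x => ∑ S : Finset (Fin n),
      (Real.exp (-(S.card : ℝ) * t) * fwCoeff g S) * walsh S x := rfl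
  rw [this, norm2sq_fourier_sum]
  refine Finset.sum_congr rfl fun T _ => ?_
  rw [mul_pow, ← Real.exp_nat_mul]
  congr 2
  push_cast
  ring

lemma fwCoeff_deriv1 (i : Fin n) (f : (Fin n → Bool) → ℝ) (T : Finset (Fin n)) :
    fwCoeff (deriv1 i f) T = if i ∈ T then 0 else fwCoeff f (insert i T) := by
  split_ifs with hi
  · -- antisymmetric under flip
    have h0 : ∑ x : Fin n → Bool, deriv1 i f x * walsh T x = 0 := by
      have hflip : ∀ x, deriv1 i f (flp i x) * walsh T (flp i x)
          = -(deriv1 i f x * walsh T x) := by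
        intro x
        have h1 : deriv1 i f (flp i x) = deriv1 i f x := by
          simp only [deriv1, flp, Function.update_idem]
        rw [h1, walsh_flp_mem hi]
        ring
      have := sum_flp i (fun x => deriv1 i f x * walsh T x)
      simp only [hflip, Finset.sum_neg_distrib] at this
      linarith
    simp [fwCoeff, expectation, h0]
  · -- main computation
    have key : (2:ℝ) * ∑ x : Fin n → Bool, f x * walsh (insert i T) x
        = ∑ x : Fin n → Bool, (f (Function.update x i true) - f (Function.update x i false))
            * walsh T x := by
      have hq : ∀ x : Fin n → Bool, f x * walsh (insert i T) x + f (flp i x) * walsh (insert i T) (flp i x)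
          = (f (Function.update x i true) - f (Function.update x i false)) * walsh T x := by
        intro x
        rw [walsh_eq_factor (Finset.mem_insert_self i T),
            walsh_eq_factor (Finset.mem_insert_self i T) (flp i x)]
        have he : (insert i T).erase i = T := Finset.erase_insert hi
        rw [he, show walsh T (flp i x) = walsh T x from walsh_flp_not_mem hi x,
          show flp i x i = !(x i) from Function.update_self _ _ _]
        cases hb : x i
        · have h1 : Function.update x i false = x := by
            rw [← hb]; exact Function.update_eq_self _ _
          have h2 : flp i x = Function.update x i true := by rw [flp, hb]; rfl
          rw [h1, h2]; simp; ring
        · have h1 : Function.update x i true = x := by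
            rw [← hb]; exact Function.update_eq_self _ _
          have h2 : flp i x = Function.update x i false := by rw [flp, hb]; rfl
          rw [h1, h2]; simp; ring
      calc (2:ℝ) * ∑ x : Fin n → Bool, f x * walsh (insert i T) x
          = (∑ x : Fin n → Bool, f x * walsh (insert i T) x)
            + ∑ x : Fin n → Bool, f (flp i x) * walsh (insert i T) (flp i x) := by
            rw [sum_flp i (fun x => f x * walsh (insert i T) x)]; ring
        _ = ∑ x : Fin n → Bool, (f x * walsh (insert i T) x
              + f (flp i x) * walsh (insert i T) (flp i x)) := (Finset.sum_add_distrib).symm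
        _ = _ := Finset.sum_congr rfl fun x _ => hq x
    simp only [fwCoeff, expectation, deriv1]
    have h3 : ∑ x : Fin n → Bool,
        (f (Function.update x i true) - f (Function.update x i false)) / 2 * walsh T x
        = (∑ x : Fin n → Bool,
            (f (Function.update x i true) - f (Function.update x i false)) * walsh T x) / 2 := by
      rw [Finset.sum_div]
      exact Finset.sum_congr rfl fun x _ => by ring
    rw [h3, ← key]
    ring

end lemmas2

section lemmas3
variable {n : ℕ}

lemma fwCoeff_foldr (l : List (Fin n)) (hl : l.Nodup) (f : (Fin n → Bool) → ℝ)
    (T : Finset (Fin n)) :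
    fwCoeff (l.foldr deriv1 f) T =
      if ∀ i ∈ l, i ∉ T then fwCoeff f (l.toFinset ∪ T) else 0 := by
  induction l generalizing T with
  | nil => simp
  | cons i l ih =>
    have hil : i ∉ l := (List.nodup_cons.1 hl).1
    have hnd : l.Nodup := (List.nodup_cons.1 hl).2
    rw [List.foldr_cons, fwCoeff_deriv1]
    by_cases hi : i ∈ T
    · rw [if_pos hi, if_neg]
      push_neg
      exact ⟨i, List.mem_cons_self, hi⟩
    · rw [if_neg hi, ih hnd]
      have hcond : (∀ j ∈ l, j ∉ insert i T) ↔ (∀ j ∈ i :: l, j ∉ T) := by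
        constructor
        · intro h j hj
          rcases List.mem_cons.1 hj with rfl | hj'
          · exact hi
          · exact fun hjT => h j hj' (Finset.mem_insert_of_mem hjT)
        · intro h j hj hins
          rcases Finset.mem_insert.1 hins with rfl | hjT
          · exact hil hj
          · exact h j (List.mem_cons_of_mem i hj) hjT
      have hset : l.toFinset ∪ insert i T = (i :: l).toFinset ∪ T := by
        rw [List.toFinset_cons, Finset.insert_union, Finset.union_insert]
      rw [hset]
      split_ifs with h1 h2 h2
      · rfl
      · exact absurd (hcond.1 h1) h2
      · exact absurd (hcond.2 h2) h1
      · rfl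

lemma fwCoeff_derivS (S : Finset (Fin n)) (f : (Fin n → Bool) → ℝ) (T : Finset (Fin n)) :
    fwCoeff (derivS S f) T = if Disjoint S T then fwCoeff f (S ∪ T) else 0 := by
  rw [derivS, fwCoeff_foldr S.toList S.nodup_toList]
  have h1 : (∀ i ∈ S.toList, i ∉ T) ↔ Disjoint S T := by
    rw [Finset.disjoint_left]
    constructor
    · exact fun h a ha => h a ((Finset.mem_toList).2 ha)
    · exact fun h a ha => h ((Finset.mem_toList).1 ha)
  rw [Finset.toList_toFinset]
  split_ifs with h2 h3 h3
  · rfl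
  · exact absurd (h1.1 h2) h3
  · exact absurd (h1.2 h3) h2
  · rfl

end lemmas3

section integrals
open Real

noncomputable def Gf (k m : ℕ) (t : ℝ) : ℝ :=
  (Real.exp (2*t) - 1)^k * Real.exp (-(2*(m:ℝ))*t)

lemma Gf_eq (k m : ℕ) (hkm : k ≤ m) (t : ℝ) :
    Gf k m t = (1 - Real.exp (-2*t))^k * Real.exp (-(2*((m-k:ℕ):ℝ))*t) := by
  have ha : ∀ j : ℕ, Real.exp (-(2*(j:ℝ))*t) = Real.exp (-2*t) ^ j := by
    intro j; rw [← Real.exp_nat_mul]; congr 1; ring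
  have hone : Real.exp (2*t) * Real.exp (-2*t) = 1 := by
    rw [← Real.exp_add]; norm_num
  have hm' : m = k + (m-k) := (Nat.add_sub_cancel' hkm).symm
  rw [Gf, ha m, ha (m-k), hm', pow_add, ← mul_assoc, ← mul_pow]
  rw [show (Real.exp (2*t) - 1) * Real.exp (-2*t)
      = Real.exp (2*t) * Real.exp (-2*t) - Real.exp (-2*t) by ring, hone]
  rw [show k + (m - k) - k = m - k by omega]

lemma tendsto_exp_neg_mul (c : ℝ) (hc : 0 < c) :
    Filter.Tendsto (fun t : ℝ => Real.exp (-c*t)) Filter.atTop (nhds 0) :=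
  Real.tendsto_exp_atBot.comp (Filter.tendsto_id.const_mul_atTop_of_neg (by linarith))

lemma tendsto_Gf_self (k : ℕ) :
    Filter.Tendsto (Gf k k) Filter.atTop (nhds 1) := by
  have h : ∀ t : ℝ, (1 - Real.exp (-2*t))^k = Gf k k t := by
    intro t; rw [Gf_eq k k le_rfl t]; simp
  have h2 : Filter.Tendsto (fun t : ℝ => (1 - Real.exp (-2*t))^k)
      Filter.atTop (nhds ((1 - 0)^k)) :=
    (tendsto_const_nhds.sub (tendsto_exp_neg_mul 2 (by norm_num))).pow k
  simp only [sub_zero, one_pow] at h2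
  exact h2.congr h

lemma tendsto_Gf (k m : ℕ) (hkm : k < m) :
    Filter.Tendsto (Gf k m) Filter.atTop (nhds 0) := by
  have h : ∀ t : ℝ, (1 - Real.exp (-2*t))^k * Real.exp (-(2*((m-k:ℕ):ℝ))*t) = Gf k m t :=
    fun t => (Gf_eq k m hkm.le t).symm
  have hpos : (0:ℝ) < 2*((m-k:ℕ):ℝ) := by
    have : 1 ≤ m - k := by omega
    have : (1:ℝ) ≤ ((m-k:ℕ):ℝ) := by exact_mod_cast this
    linarith
  have h2 : Filter.Tendsto (fun t : ℝ => (1 - Real.exp (-2*t))^k * Real.exp (-(2*((m-k:ℕ):ℝ))*t))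
      Filter.atTop (nhds ((1-0)^k * 0)) := by
    refine Filter.Tendsto.mul ?_ ?_
    · exact (tendsto_const_nhds.sub (tendsto_exp_neg_mul 2 (by norm_num))).pow k
    · exact tendsto_exp_neg_mul _ hpos
  simp only [sub_zero, one_pow, one_mul] at h2
  exact h2.congr h

lemma continuous_Gf (k m : ℕ) : Continuous (Gf k m) := by
  unfold Gf; fun_prop

lemma integrableGf (k m : ℕ) (hkm : k < m) :
    IntegrableOn (Gf k m) (Set.Ioi (0:ℝ)) := by
  refine Integrable.mono (exp_neg_integrableOn_Ioi 0 (by norm_num : (0:ℝ) < 2))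
    (continuous_Gf k m).aestronglyMeasurable.restrict ?_
  rw [ae_restrict_iff' measurableSet_Ioi]
  refine Filter.Eventually.of_forall fun t ht => ?_
  have ht' : (0:ℝ) ≤ t := le_of_lt ht
  set a := Real.exp (-2*t) with ha
  have ha0 : 0 < a := Real.exp_pos _
  have ha1 : a ≤ 1 := by
    rw [ha, show (1:ℝ) = Real.exp 0 by simp]
    exact Real.exp_le_exp.2 (by nlinarith)
  have hj : (1:ℝ) ≤ ((m-k:ℕ):ℝ) := by
    have : 1 ≤ m - k := by omega
    exact_mod_cast this
  have hEb : Real.exp (-(2*((m-k:ℕ):ℝ))*t) ≤ a := by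
    rw [ha]
    exact Real.exp_le_exp.2 (by nlinarith)
  rw [Gf_eq k m hkm.le, Real.norm_eq_abs, Real.norm_eq_abs,
    abs_of_nonneg (mul_nonneg (pow_nonneg (by linarith : (0:ℝ) ≤ 1 - a) k) (Real.exp_pos _).le),
    abs_of_nonneg ha0.le]
  calc (1 - a)^k * Real.exp (-(2*((m-k:ℕ):ℝ))*t)
      ≤ 1 * Real.exp (-(2*((m-k:ℕ):ℝ))*t) := by
        refine mul_le_mul_of_nonneg_right ?_ (Real.exp_pos _).le
        exact pow_le_one₀ (by linarith) (by linarith)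
    _ ≤ a := by rw [one_mul]; exact hEb

lemma hasDerivAt_H (k m : ℕ) (hm : 1 ≤ m) (t : ℝ) :
    HasDerivAt (Gf (k+1) m)
      ((2*((k:ℝ)+1) - 2*(m:ℝ)) * Gf k (m-1) t + 2*(m:ℝ) * Gf k m t) t := by
  have h1 : HasDerivAt (fun s : ℝ => Real.exp (2*s)) (Real.exp (2*t) * 2) t := by
    simpa using ((hasDerivAt_id t).const_mul (2:ℝ)).exp
  have h2 : HasDerivAt (fun s : ℝ => (Real.exp (2*s) - 1)^(k+1))
      ((k+1 : ℕ) * (Real.exp (2*t) - 1)^k * (Real.exp (2*t) * 2)) t := by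
    simpa using (h1.sub_const 1).fun_pow (k+1)
  have h3 : HasDerivAt (fun s : ℝ => Real.exp (-(2*(m:ℝ))*s))
      (Real.exp (-(2*(m:ℝ))*t) * (-(2*(m:ℝ)))) t := by
    simpa using ((hasDerivAt_id t).const_mul (-(2*(m:ℝ)))).exp
  have h4 := h2.mul h3
  have heq : (2*((k:ℝ)+1) - 2*(m:ℝ)) * Gf k (m-1) t + 2*(m:ℝ) * Gf k m t
      = ((k+1 : ℕ) * (Real.exp (2*t) - 1)^k * (Real.exp (2*t) * 2))
          * Real.exp (-(2*(m:ℝ))*t)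
        + (Real.exp (2*t) - 1)^(k+1) * (Real.exp (-(2*(m:ℝ))*t) * (-(2*(m:ℝ)))) := by
    have hexp : Real.exp (-(2*((m-1:ℕ):ℝ))*t) = Real.exp (2*t) * Real.exp (-(2*(m:ℝ))*t) := by
      rw [← Real.exp_add]
      congr 1
      rw [Nat.cast_sub hm]
      push_cast
      ring
    simp only [Gf, hexp]
    push_cast
    ring
  rw [heq]
  exact h4

lemma Gf_zero_eq_zero (k m : ℕ) : Gf (k+1) m 0 = 0 := by simp [Gf]

lemma integralGf (k m : ℕ) (hm : k + 1 ≤ m) :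
    ∫ t in Set.Ioi (0:ℝ), Gf k m t = 1/(2*((k:ℝ)+1)*((m.choose (k+1)):ℝ)) := by
  induction m, hm using Nat.le_induction with
  | base =>
    have hder : ∀ t ∈ Set.Ici (0:ℝ), HasDerivAt (Gf (k+1) (k+1))
        (2*((k:ℝ)+1) * Gf k (k+1) t) t := by
      intro t _
      have h := hasDerivAt_H k (k+1) (by omega) t
      have he : (2*((k:ℝ)+1) - 2*((k+1:ℕ):ℝ)) * Gf k ((k+1)-1) t
          + 2*((k+1:ℕ):ℝ) * Gf k (k+1) t = 2*((k:ℝ)+1) * Gf k (k+1) t := by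
        push_cast; ring
      rw [he] at h
      exact h
    have hint : IntegrableOn (fun t => 2*((k:ℝ)+1) * Gf k (k+1) t) (Set.Ioi (0:ℝ)) :=
      (integrableGf k (k+1) (by omega)).const_mul _
    have heq := integral_Ioi_of_hasDerivAt_of_tendsto' hder hint (tendsto_Gf_self (k+1))
    rw [Gf_zero_eq_zero, sub_zero, MeasureTheory.integral_const_mul] at heq
    rw [Nat.choose_self]
    have hk : (0:ℝ) < 2*((k:ℝ)+1) := by positivity
    field_simp at heq ⊢
    simp only [Nat.cast_one, mul_one]
    linarith
  | succ m hm ih =>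
    have hder : ∀ t ∈ Set.Ici (0:ℝ), HasDerivAt (Gf (k+1) (m+1))
        ((2*((k:ℝ)+1) - 2*((m:ℝ)+1)) * Gf k m t + 2*((m:ℝ)+1) * Gf k (m+1) t) t := by
      intro t _
      have h := hasDerivAt_H k (m+1) (by omega) t
      have he : (2*((k:ℝ)+1) - 2*((m+1:ℕ):ℝ)) * Gf k ((m+1)-1) t
          + 2*((m+1:ℕ):ℝ) * Gf k (m+1) t
          = (2*((k:ℝ)+1) - 2*((m:ℝ)+1)) * Gf k m t + 2*((m:ℝ)+1) * Gf k (m+1) t := by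
        push_cast; ring
      rw [he] at h
      exact h
    have i1 : IntegrableOn (fun t => (2*((k:ℝ)+1) - 2*((m:ℝ)+1)) * Gf k m t) (Set.Ioi (0:ℝ)) :=
      (integrableGf k m (by omega)).const_mul _
    have i2 : IntegrableOn (fun t => 2*((m:ℝ)+1) * Gf k (m+1) t) (Set.Ioi (0:ℝ)) :=
      (integrableGf k (m+1) (by omega)).const_mul _
    have heq := integral_Ioi_of_hasDerivAt_of_tendsto' hder (i1.add i2)
      (tendsto_Gf (k+1) (m+1) (by omega))
    rw [Gf_zero_eq_zero, sub_zero,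
      MeasureTheory.integral_add i1 i2, MeasureTheory.integral_const_mul,
      MeasureTheory.integral_const_mul, ih] at heq
    -- heq : (2K - 2M) * (1/(2K * C(m,k+1))) + 2M * ∫ = 0
    have hc := Nat.choose_mul_succ_eq m (k+1)
    have hMK : ((m + 1 - (k+1) : ℕ) : ℝ) = (m:ℝ) - (k:ℝ) := by
      rw [Nat.cast_sub (by omega)]
      push_cast; ring
    have hcR : ((m.choose (k+1)):ℝ) * ((m:ℝ)+1)
        = (((m+1).choose (k+1)):ℝ) * ((m:ℝ) - (k:ℝ)) := by
      have := congrArg (Nat.cast : ℕ → ℝ) hc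
      push_cast at this
      rw [← hMK]
      push_cast
      linarith [this]
    have ha : (0:ℝ) < ((m.choose (k+1)):ℝ) := by
      exact_mod_cast Nat.choose_pos (by omega : k+1 ≤ m)
    have hb : (0:ℝ) < (((m+1).choose (k+1)):ℝ) := by
      exact_mod_cast Nat.choose_pos (by omega : k+1 ≤ m+1)
    have hK : (0:ℝ) < (k:ℝ)+1 := by positivity
    have hM : (0:ℝ) < (m:ℝ)+1 := by positivity
    have hMK' : (0:ℝ) < (m:ℝ) - (k:ℝ) := by
      have : (k:ℝ) + 1 ≤ (m:ℝ) := by exact_mod_cast hm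
      linarith
    rw [eq_div_iff (ne_of_gt (by positivity : (0:ℝ) < 2*((k:ℝ)+1)*(((m+1).choose (k+1)):ℝ)))]
    field_simp at heq
    have hgoal : ((∫ t in Set.Ioi (0:ℝ), Gf k (m+1) t) * (2*((k:ℝ)+1)*(((m+1).choose (k+1)):ℝ)) - 1)
        * (2*((m:ℝ)+1)*((m.choose (k+1)):ℝ)) = 0 := by
      linear_combination 2 * ((((m+1).choose (k+1)):ℝ)) * heq - 2 * hcR
    rcases mul_eq_zero.1 hgoal with h | h
    · linarith [sub_eq_zero.1 h]
    · exfalso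
      have : (0:ℝ) < 2*((m:ℝ)+1)*((m.choose (k+1)):ℝ) := by positivity
      linarith

end integrals

section perS
variable {n : ℕ}

lemma per_S (d : ℕ) (hd : 1 ≤ d) (f : (Fin n → Bool) → ℝ) (S : Finset (Fin n))
    (hS : S.card = d) :
    ∫ t in Set.Ioi (0:ℝ),
        (Real.exp (2 * t) - 1) ^ (d - 1) * Real.exp (-(2 * (d:ℝ)) * t) *
          norm2sq (heat t (derivS S f))
    = ∑ U ∈ Finset.univ.filter (fun U : Finset (Fin n) => S ⊆ U),
        fwCoeff f U ^ 2 * (1/(2*(d:ℝ)*((U.card.choose d):ℝ))) := by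
  have hptw : ∀ t : ℝ,
      (Real.exp (2 * t) - 1) ^ (d - 1) * Real.exp (-(2 * (d:ℝ)) * t) *
          norm2sq (heat t (derivS S f))
      = ∑ T : Finset (Fin n), (fwCoeff (derivS S f) T)^2 * Gf (d-1) (d + T.card) t := by
    intro t
    rw [norm2sq_heat, Finset.mul_sum]
    refine Finset.sum_congr rfl fun T _ => ?_
    rw [Gf]
    have hE : Real.exp (-(2*((d + T.card : ℕ):ℝ))*t)
        = Real.exp (-(2 * (d:ℝ)) * t) * Real.exp (-(2*(T.card:ℝ))*t) := by
      rw [← Real.exp_add]; push_cast; ring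
    rw [hE]; ring
  simp only [hptw]
  rw [MeasureTheory.integral_finset_sum _
    (fun T _ => ((integrableGf (d-1) (d + T.card) (by omega)).const_mul _))]
  have hval : ∀ T : Finset (Fin n),
      (∫ t in Set.Ioi (0:ℝ), (fwCoeff (derivS S f) T)^2 * Gf (d-1) (d + T.card) t)
      = if Disjoint S T then
          fwCoeff f (S ∪ T) ^ 2 * (1/(2*(d:ℝ)*((((S ∪ T).card).choose d):ℝ)))
        else 0 := by
    intro T
    rw [MeasureTheory.integral_const_mul, integralGf (d-1) (d + T.card) (by omega)]
    have hc1 : ((d-1:ℕ):ℝ) + 1 = (d:ℝ) := by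
      rw [Nat.cast_sub hd]; push_cast; ring
    have hc2 : d - 1 + 1 = d := by omega
    rw [hc1, hc2, fwCoeff_derivS]
    split_ifs with h
    · rw [Finset.card_union_of_disjoint h, hS]
    · simp
  rw [Finset.sum_congr rfl fun T _ => hval T]
  rw [← Finset.sum_filter]
  refine Finset.sum_nbij' (fun T => S ∪ T) (fun U => U \ S) ?_ ?_ ?_ ?_ ?_
  · intro T hT
    simp only [Finset.mem_filter, Finset.mem_univ, true_and] at hT ⊢
    exact Finset.subset_union_left
  · intro U hU
    simp only [Finset.mem_filter, Finset.mem_univ, true_and] at hU ⊢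
    exact Finset.disjoint_sdiff
  · intro T hT
    simp only [Finset.mem_filter, Finset.mem_univ, true_and] at hT
    exact Finset.union_sdiff_cancel_left hT
  · intro U hU
    simp only [Finset.mem_filter, Finset.mem_univ, true_and] at hU
    exact Finset.union_sdiff_of_subset hU
  · intro T _
    rfl

end perS

/-- integral representation of `W^{≥d}(f)` via the heat semigroup. -/
theorem statement9 (n d : ℕ) (hd : 1 ≤ d) (hdn : d ≤ n) (f : (Fin n → Bool) → ℝ) :
    Wge d f = 2 * d *
      ∑ S ∈ Finset.univ.filter (fun S : Finset (Fin n) => S.card = d),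
        ∫ t in Set.Ioi (0 : ℝ),
          (Real.exp (2 * t) - 1) ^ (d - 1) * Real.exp (-(2 * d) * t) *
            norm2sq (heat t (derivS S f)) := by
  have hR : ∑ S ∈ Finset.univ.filter (fun S : Finset (Fin n) => S.card = d),
        ∫ t in Set.Ioi (0 : ℝ),
          (Real.exp (2 * t) - 1) ^ (d - 1) * Real.exp (-(2 * d) * t) *
            norm2sq (heat t (derivS S f))
      = ∑ U : Finset (Fin n), (U.card.choose d : ℝ) *
          (fwCoeff f U ^ 2 * (1/(2*(d:ℝ)*((U.card.choose d):ℝ)))) := by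
    rw [Finset.sum_congr rfl (fun S hS => per_S d hd f S ((Finset.mem_filter.1 hS).2))]
    simp only [Finset.sum_filter]
    have hsplit : ∀ S : Finset (Fin n),
        (if S.card = d then
            (∑ U : Finset (Fin n), if S ⊆ U then
              fwCoeff f U ^ 2 * (1/(2*(d:ℝ)*((U.card.choose d):ℝ))) else 0)
          else 0)
        = ∑ U : Finset (Fin n), if S.card = d ∧ S ⊆ U then
            fwCoeff f U ^ 2 * (1/(2*(d:ℝ)*((U.card.choose d):ℝ))) else 0 := by
      intro S
      split_ifs with h
      · exact Finset.sum_congr rfl fun U _ => by simp [h]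
      · rw [eq_comm]
        simp [h]
    rw [Finset.sum_congr rfl fun S _ => hsplit S, Finset.sum_comm]
    refine Finset.sum_congr rfl fun U _ => ?_
    rw [← Finset.sum_filter]
    have hfil : Finset.univ.filter (fun S : Finset (Fin n) => S.card = d ∧ S ⊆ U)
        = U.powersetCard d := by
      ext S
      simp [Finset.mem_powersetCard, and_comm]
    rw [hfil, Finset.sum_const, Finset.card_powersetCard, nsmul_eq_mul]
  rw [hR, Finset.mul_sum, Wge, Finset.sum_filter]
  refine Finset.sum_congr rfl fun U _ => ?_
  split_ifs with h
  · have hpos : (0:ℝ) < (U.card.choose d : ℝ) := by exact_mod_cast Nat.choose_pos h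
    have hdpos : (0:ℝ) < (d:ℝ) := by exact_mod_cast hd
    field_simp
  · rw [Nat.choose_eq_zero_of_lt (by omega)]
    simp
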